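/- Let A and B be Hilbert algebras and let Φ be a monoid isomorphism from the endomorphism monoid of A (all endomorphisms under composition) onto the endomorphism monoid of B. Then an endomorphism φ of A is a closure endomorphism of A if and only if Φ(φ) is a closure endomorphism of B; consequently, Φ restricts to an isomorphism between the submonoids of closure endomorphisms of A and of B. -/
import Mathlib


/-- A Hilbert algebra: a set with implication `imp` and constant `one`. -/
class HilbertAlgebra (A : Type*) where
  imp : A → A → A
  one : A
  imp_one : ∀ x y : A, imp x (imp y x) = one
  imp_distrib : ∀ x y z : A,
    imp (imp x (imp y z)) (imp (imp x y) (imp x z)) = one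
  imp_antisymm : ∀ x y : A, imp x y = one → imp y x = one → x = y

namespace HilbertAlgebra

variable {A : Type*} [HilbertAlgebra A]

/-- The natural order of a Hilbert algebra: `x ≤ y` iff `x → y = 1`. -/
def le (x y : A) : Prop := imp x y = one

/-- An endomorphism of a Hilbert algebra. -/
def IsEndo (φ : A → A) : Prop := ∀ x y : A, φ (imp x y) = imp (φ x) (φ y)

/-- A closure endomorphism: an endomorphism that is also a closure operator. -/
def IsClosureEndo (φ : A → A) : Prop :=
  IsEndo φ ∧
  (∀ x : A, le x (φ x)) ∧
  (∀ x : A, φ (φ x) = φ x) ∧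
  (∀ x y : A, le x y → le (φ x) (φ y))

/-- The composition of two endomorphisms is an endomorphism. -/
theorem isEndo_comp {φ ψ : A → A} (hφ : IsEndo φ) (hψ : IsEndo ψ) :
    IsEndo (φ ∘ ψ) := by
  intro x y
  show φ (ψ (imp x y)) = imp (φ (ψ x)) (φ (ψ y))
  rw [hψ x y, hφ]

/-- The identity map is an endomorphism. -/
theorem isEndo_id : IsEndo (id : A → A) := fun _ _ => rfl

/-- The endomorphisms of `A`, as a subtype. -/
def Endo (A : Type*) [HilbertAlgebra A] := {f : A → A // IsEndo f}

/-- Composition of endomorphisms. -/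
def Endo.comp {A : Type*} [HilbertAlgebra A] (f g : Endo A) : Endo A :=
  ⟨f.val ∘ g.val, isEndo_comp f.2 g.2⟩

/-! ### Auxiliary lemmas: basic arithmetic of Hilbert algebras -/

lemma imp_top (x : A) : imp x one = one := by
  have h1 : imp one (imp x one) = one := imp_one one x
  have h2 : imp (imp x one) (imp one (imp x one)) = one := imp_one (imp x one) one
  rw [h1] at h2
  exact imp_antisymm _ _ h2 h1

lemma eq_one_of (x : A) (h : imp one x = one) : x = one :=
  imp_antisymm x one (imp_top x) h

lemma imp_self (x : A) : imp x x = one := by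
  have s := imp_distrib x (imp one x) x
  rw [imp_one x (imp one x), imp_one x one] at s
  exact eq_one_of _ (eq_one_of _ s)

lemma one_imp (x : A) : imp one x = x := by
  have b := imp_distrib (imp one x) one x
  rw [imp_self (imp one x), imp_top (imp one x)] at b
  exact imp_antisymm _ _ (eq_one_of _ (eq_one_of _ b)) (imp_one x one)

lemma le_trans' {x y z : A} (hxy : imp x y = one) (hyz : imp y z = one) :
    imp x z = one := by
  have s := imp_distrib x y z
  rw [hyz, imp_top x, one_imp, hxy, one_imp] at s
  exact s

lemma imp_le_imp_left {a b : A} (h : imp a b = one) (c : A) :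
    imp (imp b c) (imp a c) = one := by
  have s := imp_distrib a b c
  rw [h, one_imp] at s
  exact le_trans' (imp_one (imp b c) a) s

lemma exchange_le (x y z : A) :
    imp (imp x (imp y z)) (imp y (imp x z)) = one :=
  le_trans' (imp_distrib x y z) (imp_le_imp_left (imp_one y x) (imp x z))

lemma imp_dist (x y z : A) : imp x (imp y z) = imp (imp x y) (imp x z) :=
  imp_antisymm _ _ (imp_distrib x y z)
    (le_trans' (imp_le_imp_left (imp_one y x) (imp x z)) (exchange_le y x z))

lemma imp_imp_self (x y : A) : imp x (imp x y) = imp x y := by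
  rw [imp_dist, imp_self, one_imp]

lemma endo_one {φ : A → A} (h : IsEndo φ) : φ one = one := by
  have h1 := h one one
  rw [imp_self one] at h1
  rw [h1, imp_self]

lemma endo_mono {φ : A → A} (h : IsEndo φ) {x y : A} (hxy : imp x y = one) :
    imp (φ x) (φ y) = one := by
  rw [← h, hxy, endo_one h]

lemma sigma_isEndo (a : A) : IsEndo (fun y => imp a y) := fun x y => imp_dist a x y

/-! ### The monoid-theoretic characterization of closure endomorphisms:
`f` is a closure endomorphism iff `f ∘ f = f` and for every idempotent
endomorphism `g` one has `g ∘ f = g ∘ f ∘ g`. -/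

/-- The monoid-language property characterizing closure endomorphisms. -/
def IsCE (f : Endo A) : Prop :=
  f.comp f = f ∧ ∀ g : Endo A, g.comp g = g → g.comp f = (g.comp f).comp g

lemma closure_isCE {f : Endo A} (hf : IsClosureEndo f.val) : IsCE f := by
  obtain ⟨hE, hext, hidem, _⟩ := hf
  constructor
  · exact Subtype.ext (funext hidem)
  · intro g hg
    apply Subtype.ext
    funext x
    have hgE := g.2
    have hgg : ∀ y, g.val (g.val y) = g.val y :=
      fun y => congrFun (congrArg Subtype.val hg) y
    -- g (x → g x) = 1 and g (g x → x) = 1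
    have h1 : g.val (imp x (g.val x)) = one := by
      rw [hgE, hgg, imp_self]
    have h2 : g.val (imp (g.val x) x) = one := by
      rw [hgE, hgg, imp_self]
    -- hence g (f (x → g x)) = 1 and g (f (g x → x)) = 1, by extensivity of f
    have h3 : g.val (f.val (imp x (g.val x))) = one := by
      have := endo_mono hgE (hext (imp x (g.val x)))
      rw [h1, one_imp] at this
      exact this
    have h4 : g.val (f.val (imp (g.val x) x)) = one := by
      have := endo_mono hgE (hext (imp (g.val x) x))
      rw [h2, one_imp] at this
      exact this
    have e1 : imp (g.val (f.val x)) (g.val (f.val (g.val x))) = one := by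
      rw [← hgE, ← hE]
      exact h3
    have e2 : imp (g.val (f.val (g.val x))) (g.val (f.val x)) = one := by
      rw [← hgE, ← hE]
      exact h4
    exact imp_antisymm _ _ e1 e2

lemma isCE_closure {f : Endo A} (h : IsCE f) : IsClosureEndo f.val := by
  obtain ⟨h1, h2⟩ := h
  have hE := f.2
  refine ⟨hE, ?_, ?_, ?_⟩
  · intro x
    let σ : Endo A := ⟨fun y => imp x y, sigma_isEndo x⟩
    have hσ : σ.comp σ = σ := Subtype.ext (funext fun y => imp_imp_self x y)
    have h := h2 σ hσ
    have hx := congrFun (congrArg Subtype.val h) x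
    have hl : (σ.comp f).val x = imp x (f.val x) := rfl
    have hr : ((σ.comp f).comp σ).val x = imp x (f.val (imp x x)) := rfl
    rw [hl, hr, imp_self x, endo_one hE, imp_top] at hx
    exact hx
  · intro x
    exact congrFun (congrArg Subtype.val h1) x
  · intro x y hxy
    exact endo_mono hE hxy

lemma isCE_transfer {B : Type*} [HilbertAlgebra B] (Φ : Endo A ≃ Endo B)
    (hcomp : ∀ f g : Endo A, Φ (f.comp g) = (Φ f).comp (Φ g))
    (f : Endo A) (hf : IsCE f) : IsCE (Φ f) := by
  constructor
  · have h := congrArg Φ hf.1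
    rw [hcomp] at h
    exact h
  · intro g' hg'
    have hΦg : Φ (Φ.symm g') = g' := Φ.apply_symm_apply g'
    have hgg : (Φ.symm g').comp (Φ.symm g') = Φ.symm g' := by
      apply Φ.injective
      rw [hcomp, hΦg, hg']
    have h := congrArg Φ (hf.2 (Φ.symm g') hgg)
    rw [hcomp, hcomp, hcomp, hΦg] at h
    exact h

/-- If `Φ` is an isomorphism between the endomorphism monoids of Hilbert algebras
`A` and `B` (a bijection preserving composition and the identity), then an
endomorphism `f` of `A` is a closure endomorphism iff `Φ f` is a closure
endomorphism of `B`; consequently `Φ` restricts to an isomorphism (a bijection,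
automatically compatible with composition) between the submonoids of closure
endomorphisms of `A` and of `B`. -/
theorem closureEndo_iff_of_endoMonoid_iso {B : Type*} [HilbertAlgebra B]
    (Φ : Endo A ≃ Endo B)
    (hcomp : ∀ f g : Endo A, Φ (f.comp g) = (Φ f).comp (Φ g))
    (hid : Φ ⟨id, isEndo_id⟩ = ⟨id, isEndo_id⟩) :
    (∀ f : Endo A, IsClosureEndo f.val ↔ IsClosureEndo (Φ f).val) ∧
    ∃ Ψ : {f : Endo A // IsClosureEndo f.val} ≃ {g : Endo B // IsClosureEndo g.val},
      ∀ f : {f : Endo A // IsClosureEndo f.val}, (Ψ f).val = Φ f.val := by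
  have hcomp' : ∀ a b : Endo B, Φ.symm (a.comp b) = (Φ.symm a).comp (Φ.symm b) := by
    intro a b
    apply Φ.injective
    rw [hcomp, Φ.apply_symm_apply, Φ.apply_symm_apply, Φ.apply_symm_apply]
  have key : ∀ f : Endo A, IsClosureEndo f.val ↔ IsClosureEndo (Φ f).val := by
    intro f
    constructor
    · intro h
      exact isCE_closure (isCE_transfer Φ hcomp f (closure_isCE h))
    · intro h
      have h2 := isCE_transfer Φ.symm hcomp' (Φ f) (closure_isCE h)
      rw [Φ.symm_apply_apply] at h2
      exact isCE_closure h2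
  exact ⟨key, ⟨Φ.subtypeEquiv key, fun f => rfl⟩⟩

end HilbertAlgebra
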